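/- Let (ρ_K, v_K, p_K), K ∈ {L, R}, be two one-dimensional primitive states with ρ_K > 0, p_K > 0, |v_K| < 1, and suppose ρ_L ≠ ρ_R and ρ_L/p_L ≠ ρ_R/p_R. Set θ_K = p_K/ρ_K, γ_K = 1/√(1−v_K²), and the parameter variables z₁ = ρ, z₂ = ρ/p, z₃ = γv. Let h_L, h_R, S_L, S_R be arbitrary real numbers (in the application h_K = 1+e(θ_K)+θ_K and S_K = −ln ρ_K + σ(θ_K) for a Synge-type EOS). Define the entropy variables W_K = (z₂,K h_K − S_K, z₃,K z₂,K, −z₂,K γ_K) ∈ ℝ³ and the entropy potential ψ_K = z₁,K z₃,K. With jump [a] = a_R − a_L, arithmetic mean {{a}} = (a_L+a_R)/2, and logarithmic mean {{a}}_ln = (a_R−a_L)/(ln a_R − ln a_L), define E = ([W₁] − [ln z₁])/[z₂], ρĥ = ({{z₁}}/{{z₂}} + {{z₁}}_ln · E)/({{γ}}² − {{z₃}}²), and the two-point flux F̃ = ({{z₁}}_ln{{z₃}}, ρĥ{{z₃}}² + {{z₁}}/{{z₂}}, ρĥ{{γ}}{{z₃}}) ∈ ℝ³. Then {{γ}}²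 − {{z₃}}² > 0 and (W_R − W_L) · F̃ = ψ_R − ψ_L; i.e., F̃ is a two-point entropy conservative numerical flux for 1D relativistic hydrodynamics. -/

import Mathlib

/-!
Write `[a] = a_R - a_L` and `{{a}} = (a_L + a_R)/2`, and split every jump of a product as
`[ab] = {{a}}[b] + {{b}}[a]`. Since `γ² - z₃² = 1` on both sides, `{{z₃}}[z₃] = {{γ}}[γ]`, so the
`ρĥ`-terms of `[W] · F̃` collapse to
`-ρĥ{{z₃}}[z₂]({{γ}}² - {{z₃}}²) = -{{z₃}}[z₂]({{z₁}}/{{z₂}} + {{z₁}}_ln E)`.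
The `E`-part cancels against the first component, because `[W₁] = E[z₂] + [ln z₁]` and
`{{z₁}}_ln[ln z₁] = [z₁]`; the `{{z₁}}/{{z₂}}`-part cancels against the pressure term of the
second one, leaving `{{z₃}}[z₁] + {{z₁}}[z₃] = [z₁z₃]`. The denominator `{{γ}}² - {{z₃}}²` is
positive because the midpoint of two points of the forward unit hyperbola lies in the (convex)
future light cone.
-/

open Matrix Real

theorem lorentzFactor_sq_sub_sq {v : ℝ} (hv : |v| < 1) :
    (1 / √(1 - v ^ 2)) ^ 2 - (1 / √(1 - v ^ 2) * v) ^ 2 = 1 := by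
  have hpos : 0 < 1 - v ^ 2 := by nlinarith [abs_lt.mp hv]
  rw [mul_pow, div_pow, one_pow, sq_sqrt hpos.le]
  field_simp

theorem lorentzFactor_pos {v : ℝ} (hv : |v| < 1) : 0 < 1 / √(1 - v ^ 2) := by
  have hpos : 0 < 1 - v ^ 2 := by nlinarith [abs_lt.mp hv]
  positivity

theorem sq_avg_sub_sq_avg_pos_of_hyperbola {g₁ g₂ z₁ z₂ : ℝ} (hg₁ : 0 < g₁) (hg₂ : 0 < g₂)
    (h₁ : g₁ ^ 2 - z₁ ^ 2 = 1) (h₂ : g₂ ^ 2 - z₂ ^ 2 = 1) :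
    0 < ((g₁ + g₂) / 2) ^ 2 - ((z₁ + z₂) / 2) ^ 2 := by
  have hz₁ : |z₁| < g₁ := abs_lt_of_sq_lt_sq (by linarith) hg₁.le
  have hz₂ : |z₂| < g₂ := abs_lt_of_sq_lt_sq (by linarith) hg₂.le
  have hprod : z₁ * z₂ < g₁ * g₂ :=
    calc z₁ * z₂ ≤ |z₁| * |z₂| := by rw [← abs_mul]; exact le_abs_self _
      _ < g₁ * g₂ := mul_lt_mul'' hz₁ hz₂ (abs_nonneg _) (abs_nonneg _)
  nlinarith

theorem entropyConservative_of_mean_relations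
    {z1L z1R z2L z2R z3L z3R γL γR w1L w1R lm E P ρh : ℝ}
    (hγ : γL ^ 2 - z3L ^ 2 = γR ^ 2 - z3R ^ 2)
    (hlm : lm * (log z1R - log z1L) = z1R - z1L)
    (hE : E * (z2R - z2L) = w1R - w1L - (log z1R - log z1L))
    (hP : P * ((z2L + z2R) / 2) = (z1L + z1R) / 2)
    (hρh : ρh * (((γL + γR) / 2) ^ 2 - ((z3L + z3R) / 2) ^ 2) = P + lm * E) :
    (w1R - w1L) * (lm * ((z3L + z3R) / 2))
        + (z3R * z2R - z3L * z2L) * (ρh * ((z3L + z3R) / 2) ^ 2 + P)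
        + (-(z2R * γR) - -(z2L * γL)) * (ρh * ((γL + γR) / 2) * ((z3L + z3R) / 2))
      = z1R * z3R - z1L * z3L := by
  have hmid : (z3L + z3R) / 2 * (z3R - z3L) = (γL + γR) / 2 * (γR - γL) := by
    linear_combination (1 / 2) * hγ
  linear_combination -(lm * ((z3L + z3R) / 2)) * hE - ((z3L + z3R) / 2 * (z2R - z2L)) * hρh
    + ((z3L + z3R) / 2) * hlm + (z3R - z3L) * hP
    + ρh * ((z2L + z2R) / 2) * ((z3L + z3R) / 2) * hmid

theorem stmt6 (ρL pL vL ρR pR vR hL hR SL SR : ℝ)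
    (hρL : 0 < ρL) (hpL : 0 < pL) (hvL : |vL| < 1)
    (hρR : 0 < ρR) (hpR : 0 < pR) (hvR : |vR| < 1)
    (hne1 : ρL ≠ ρR) (hne2 : ρL / pL ≠ ρR / pR) :
    let γL : ℝ := 1 / Real.sqrt (1 - vL ^ 2)
    let γR : ℝ := 1 / Real.sqrt (1 - vR ^ 2)
    let z1L : ℝ := ρL
    let z1R : ℝ := ρR
    let z2L : ℝ := ρL / pL
    let z2R : ℝ := ρR / pR
    let z3L : ℝ := γL * vL
    let z3R : ℝ := γR * vR
    let WL : Fin 3 → ℝ := ![z2L * hL - SL, z3L * z2L, -(z2L * γL)]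
    let WR : Fin 3 → ℝ := ![z2R * hR - SR, z3R * z2R, -(z2R * γR)]
    let ψL : ℝ := z1L * z3L
    let ψR : ℝ := z1R * z3R
    let az1 : ℝ := (z1L + z1R) / 2
    let az2 : ℝ := (z2L + z2R) / 2
    let az3 : ℝ := (z3L + z3R) / 2
    let aγ : ℝ := (γL + γR) / 2
    let lz1 : ℝ := (z1R - z1L) / (Real.log z1R - Real.log z1L)
    let E : ℝ := ((z2R * hR - SR) - (z2L * hL - SL) - (Real.log z1R - Real.log z1L))
      / (z2R - z2L)
    let ρh : ℝ := (az1 / az2 + lz1 * E) / (aγ ^ 2 - az3 ^ 2)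
    let Ftil : Fin 3 → ℝ := ![lz1 * az3, ρh * az3 ^ 2 + az1 / az2, ρh * aγ * az3]
    0 < aγ ^ 2 - az3 ^ 2 ∧ (WR - WL) ⬝ᵥ Ftil = ψR - ψL := by
  intro γL γR z1L z1R z2L z2R z3L z3R WL WR ψL ψR az1 az2 az3 aγ lz1 E ρh Ftil
  have hD : 0 < aγ ^ 2 - az3 ^ 2 :=
    sq_avg_sub_sq_avg_pos_of_hyperbola (lorentzFactor_pos hvL) (lorentzFactor_pos hvR)
      (lorentzFactor_sq_sub_sq hvL) (lorentzFactor_sq_sub_sq hvR)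
  have hlog : log z1R - log z1L ≠ 0 :=
    sub_ne_zero.mpr fun h ↦ hne1 (log_injOn_pos hρR hρL h).symm
  have hz2 : z2R - z2L ≠ 0 := sub_ne_zero.mpr hne2.symm
  have haz2 : az2 ≠ 0 := by positivity
  refine ⟨hD, ?_⟩
  simp only [WL, WR, Ftil, dotProduct, Fin.sum_univ_three, Pi.sub_apply, cons_val_zero,
    cons_val_one, cons_val_two, head_cons, tail_cons]
  exact entropyConservative_of_mean_relations
    ((lorentzFactor_sq_sub_sq hvL).trans (lorentzFactor_sq_sub_sq hvR).symm)
    (div_mul_cancel₀ _ hlog) (div_mul_cancel₀ _ hz2) (div_mul_cancel₀ _ haz2)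
    (div_mul_cancel₀ _ hD.ne')
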